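/- Let a hypergraph have hyperedges e_1, …, e_m, each a nonempty finite set of nodes; let x_v ∈ ℝ^d be a feature vector for each node and x_{e_i} ∈ ℝ^d a feature vector for each hyperedge e_i. Define the smoothness measure f_ev = Σ_{i=1}^m Σ_{v∈e_i} ‖x_{e_i} − x_v‖₂ and its node-only approximation f_v = Σ_{i=1}^m max_{u,w∈e_i} ‖x_u − x_w‖₂. Then f_v ≤ f_ev, i.e., f_v is a lower bound for f_ev. -/
import Mathlib


/-- Theorem 1 of the paper, distance form: For a hypergraph with
hyperedges `e 1, …, e m` (each a nonempty finite set of nodes), node features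
`x v ∈ ℝ^d` and hyperedge features `xe i ∈ ℝ^d`, the node-only smoothness
`f_v = Σ_i max_{u,w∈e i} ‖x u − x w‖₂` is a lower bound for the hyperedge–node
smoothness `f_ev = Σ_i Σ_{v∈e i} ‖xe i − x v‖₂`. -/
theorem node_smoothness_le_hyperedge_smoothness {V : Type*} {d m : ℕ}
    (e : Fin m → Finset V) (he : ∀ i, (e i).Nonempty)
    (x : V → EuclideanSpace ℝ (Fin d)) (xe : Fin m → EuclideanSpace ℝ (Fin d)) :
    ∑ i, (e i ×ˢ e i).sup' ((he i).product (he i)) (fun p => ‖x p.1 - x p.2‖) ≤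
      ∑ i, ∑ v ∈ e i, ‖xe i - x v‖ := by
  classical
  refine Finset.sum_le_sum fun i _ => ?_
  rw [Finset.sup'_le_iff]
  rintro ⟨u, w⟩ hp
  rw [Finset.mem_product] at hp
  obtain ⟨hu, hw⟩ := hp
  by_cases huw : u = w
  · subst huw
    simp only [sub_self, norm_zero]
    exact Finset.sum_nonneg fun v _ => norm_nonneg _
  · calc ‖x u - x w‖ ≤ ‖xe i - x u‖ + ‖xe i - x w‖ := by
          have := norm_sub_le (x u - xe i) (x w - xe i)
          simpa [norm_sub_rev, sub_sub_sub_cancel_right] using this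
      _ = ∑ v ∈ ({u, w} : Finset V), ‖xe i - x v‖ := by
          rw [Finset.sum_pair huw]
      _ ≤ ∑ v ∈ e i, ‖xe i - x v‖ := by
          refine Finset.sum_le_sum_of_subset_of_nonneg ?_ fun v _ _ => norm_nonneg _
          intro v hv
          rcases Finset.mem_insert.mp hv with h | h
          · exact h ▸ hu
          · exact (Finset.mem_singleton.mp h) ▸ hw
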